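/- Let R be a commutative Noetherian ring and a an ideal of R. If f : M → N is a homomorphism of a-adically complete R-modules, then both ker(f) and im(f) are a-adically complete. -/

import Mathlib

/-!
The range of `f` is a submodule of the Hausdorff module `N` and a quotient of the precomplete
module `M`, so it is complete. The kernel is closed in `M` because `N` is Hausdorff. A Cauchy
sequence in `ker f` converges in `M`; writing its increments in `a ^ (n + m) • ker f` through
finitely many generators of `a ^ n` as combinations of elements of `a ^ m • ker f`, and summing
these coefficient series in `M` (their limits lie in `ker f` by closedness), shows that the
sequence converges in the `a`-adic topology of `ker f` itself.
-/

universe u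

open Submodule

section

variable {R M N : Type*} [CommRing R] [AddCommGroup M] [Module R M]
  [AddCommGroup N] [Module R N] {I : Ideal R}

theorem IsHausdorff.of_injective [IsHausdorff I N] {f : M →ₗ[R] N}
    (hf : Function.Injective f) : IsHausdorff I M where
  haus' x hx := hf <| by
    rw [map_zero]
    exact IsHausdorff.haus ‹_› (f x) fun n ↦
      SModEq.zero.mpr <| smul_top_le_comap_smul_top (I ^ n) f <| SModEq.zero.mp (hx n)

theorem IsPrecomplete.of_surjective [IsPrecomplete I M] {f : M →ₗ[R] N}
    (hf : Function.Surjective f) : IsPrecomplete I N := by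
  rw [← AdicCompletion.of_surjective_iff]
  intro y
  obtain ⟨y', rfl⟩ := AdicCompletion.map_surjective I hf y
  obtain ⟨x, rfl⟩ := AdicCompletion.of_surjective I M y'
  exact ⟨f x, rfl⟩

theorem IsPrecomplete.exists_sub_sum_range_mem [IsPrecomplete I M] {d : ℕ → M}
    (hd : ∀ m, d m ∈ (I ^ m • ⊤ : Submodule R M)) :
    ∃ L : M, ∀ T, L - ∑ m ∈ Finset.range T, d m ∈ (I ^ T • ⊤ : Submodule R M) := by
  have hcauchy {T T' : ℕ} (h : T ≤ T') :
      ∑ m ∈ Finset.range T, d m ≡ ∑ m ∈ Finset.range T', d m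
        [SMOD (I ^ T • ⊤ : Submodule R M)] := by
    rw [SModEq.sub_mem, ← neg_mem_iff, neg_sub,
      ← Finset.sum_sdiff_eq_sub (Finset.range_subset_range.mpr h)]
    refine sum_mem fun m hm ↦ smul_mono_left (Ideal.pow_le_pow_right ?_) (hd m)
    simpa using (Finset.mem_sdiff.mp hm).2
  obtain ⟨L, hL⟩ := IsPrecomplete.prec ‹_› hcauchy
  exact ⟨L, fun T ↦ by simpa using neg_mem (SModEq.sub_mem.mp (hL T))⟩

theorem Submodule.exists_sum_smul_of_mem_span_smul {s : Finset R} {P : Submodule R M}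
    {x : M} (hx : x ∈ Ideal.span (s : Set R) • P) :
    ∃ c : R → M, (∀ g, c g ∈ P) ∧ x = ∑ g ∈ s, g • c g := by
  rw [span_smul_eq, mem_set_smul] at hx
  obtain ⟨c, hcs, rfl⟩ := hx
  refine ⟨fun g ↦ c g, fun g ↦ (c g).2, ?_⟩
  rw [Finsupp.sum_of_support_subset c hcs] <;> simp

theorem LinearMap.iInf_ker_sup_pow_smul_top_le_ker [IsHausdorff I N] (f : M →ₗ[R] N) :
    ⨅ n : ℕ, LinearMap.ker f ⊔ I ^ n • ⊤ ≤ LinearMap.ker f := by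
  intro x hx
  refine IsHausdorff.haus ‹_› (f x) fun n ↦ SModEq.zero.mpr ?_
  obtain ⟨k, hk, y, hy, rfl⟩ := mem_sup.mp (mem_iInf _ |>.mp hx n)
  rw [map_add, LinearMap.mem_ker.mp hk, zero_add]
  exact smul_top_le_comap_smul_top (I ^ n) f hy

theorem Submodule.mem_pow_smul_of_sub_sum_range_mem [IsAdicComplete I M] {K : Submodule R M}
    (hK : ⨅ n : ℕ, K ⊔ I ^ n • ⊤ ≤ K) {n : ℕ} (hn : (I ^ n).FG) {d : ℕ → M}
    (hd : ∀ m, d m ∈ I ^ (n + m) • K) {y : M}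
    (hy : ∀ T, y - ∑ m ∈ Finset.range T, d m ∈ (I ^ T • ⊤ : Submodule R M)) :
    y ∈ I ^ n • K := by
  obtain ⟨s, hs⟩ := hn
  have hdecomp (m : ℕ) : ∃ c : R → M, (∀ g, c g ∈ I ^ m • K) ∧ d m = ∑ g ∈ s, g • c g :=
    exists_sum_smul_of_mem_span_smul (by rw [hs, ← mul_smul, ← pow_add]; exact hd m)
  choose c hcK hdc using hdecomp
  choose z hz using fun g ↦ IsPrecomplete.exists_sub_sum_range_mem (I := I)
    fun m ↦ (smul_mono_right _ le_top : I ^ m • K ≤ I ^ m • ⊤) (hcK m g)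
  have hzK (g : R) : z g ∈ K := hK <| mem_iInf _ |>.mpr fun T ↦ mem_sup.mpr
    ⟨∑ m ∈ Finset.range T, c m g, sum_mem fun m _ ↦ smul_le_right (hcK m g),
      _, hz g T, add_sub_cancel _ _⟩
  have hyz : y = ∑ g ∈ s, g • z g := by
    refine IsHausdorff.eq_iff_smodEq (I := I).mpr fun T ↦ SModEq.sub_mem.mpr ?_
    have hsum :
        ∑ m ∈ Finset.range T, d m = ∑ g ∈ s, g • ∑ m ∈ Finset.range T, c m g := by
      simp only [hdc, Finset.smul_sum]
      exact Finset.sum_comm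
    have hsplit : y - ∑ g ∈ s, g • z g = (y - ∑ m ∈ Finset.range T, d m)
        - ∑ g ∈ s, g • (z g - ∑ m ∈ Finset.range T, c m g) := by
      simp only [hsum, smul_sub, Finset.sum_sub_distrib]
      abel
    rw [hsplit]
    exact sub_mem (hy T) (sum_mem fun g _ ↦ smul_mem _ g (hz g T))
  rw [hyz, ← hs]
  exact sum_mem fun g hg ↦ smul_mem_smul (Ideal.subset_span hg) (hzK g)

theorem IsPrecomplete.of_iInf_sup_le [IsAdicComplete I M] (hI : I.FG) {K : Submodule R M}
    (hK : ⨅ n : ℕ, K ⊔ I ^ n • ⊤ ≤ K) : IsPrecomplete I K := by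
  refine ⟨fun {x} hx ↦ ?_⟩
  have hxK {m n : ℕ} (h : m ≤ n) : (x m : M) - x n ∈ I ^ m • K :=
    (mem_smul_top_iff _ K _).mp (SModEq.sub_mem.mp (hx h))
  obtain ⟨L, hL⟩ := IsPrecomplete.prec (I := I) inferInstance (f := fun n ↦ (x n : M))
    fun {m _} h ↦ SModEq.sub_mem.mpr <|
      (smul_mono_right _ le_top : I ^ m • K ≤ I ^ m • ⊤) (hxK h)
  have hLx (n : ℕ) : L - x n ∈ I ^ n • K := by
    refine mem_pow_smul_of_sub_sum_range_mem hK (Ideal.FG.pow hI)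
      (d := fun m ↦ x (n + m + 1) - x (n + m))
      (fun m ↦ by simpa using neg_mem (hxK (Nat.le_succ (n + m)))) fun T ↦ ?_
    have htelescope :
        ∑ m ∈ Finset.range T, ((x (n + m + 1) : M) - x (n + m)) = x (n + T) - x n := by
      simpa [add_assoc] using Finset.sum_range_sub (fun m ↦ (x (n + m) : M)) T
    rw [htelescope, sub_sub_sub_cancel_right]
    exact smul_mono_left (Ideal.pow_le_pow_right (Nat.le_add_left T n))
      (by simpa using neg_mem (SModEq.sub_mem.mp (hL (n + T))))
  have hLK : L ∈ K := by simpa using add_mem (smul_le_right (hLx 0)) (x 0).2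
  refine ⟨⟨L, hLK⟩, fun n ↦ SModEq.sub_mem.mpr ((mem_smul_top_iff _ K _).mpr ?_)⟩
  simpa using neg_mem (hLx n)

end

/-- If `f : M → N` is a homomorphism of `a`-adically complete modules over a Noetherian
ring, then `ker f` and `im f` are `a`-adically complete. -/
theorem ker_and_range_isAdicComplete
    {R : Type u} [CommRing R] [IsNoetherianRing R] (a : Ideal R)
    (M N : Type u) [AddCommGroup M] [Module R M] [AddCommGroup N] [Module R N]
    [IsAdicComplete a M] [IsAdicComplete a N] (f : M →ₗ[R] N) :
    IsAdicComplete a (LinearMap.ker f) ∧ IsAdicComplete a (LinearMap.range f) :=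
  ⟨{ toIsHausdorff := .of_injective (LinearMap.ker f).injective_subtype
     toIsPrecomplete := .of_iInf_sup_le (IsNoetherian.noetherian a)
       f.iInf_ker_sup_pow_smul_top_le_ker },
   { toIsHausdorff := .of_injective (LinearMap.range f).injective_subtype
     toIsPrecomplete := .of_surjective f.surjective_rangeRestrict }⟩
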